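/- Suppose F ∈ ℍ[z] and γ ∈ ℍ are such that F has no left or right zeros in the conjugacy class [γ]. Then the polynomial (z−γ)F equals Q·(z−β) where β = (F^{eℓ}(\bar{γ}))⁻¹ γ F^{eℓ}(\bar{γ}), Q has no zeros in [γ], and moreover γ = F^{er}(β) β (F^{er}(β))⁻¹. -/

import Mathlib

open Polynomial

/-- Left evaluation of a quaternion polynomial: `f^{eℓ}(α) = Σ α^j f_j`. -/
noncomputable def levalQ (α : Quaternion ℝ) (f : Polynomial (Quaternion ℝ)) : Quaternion ℝ :=
  f.sum fun j a => α ^ j * a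

/-!
Put `a = F^{eℓ}(γ̄)` and `β = a⁻¹γa`. With `F̄` the coefficientwise conjugate of `F`, one has
`ā = F̄(γ)` and `β ā = ā γ`, so the right value at `γ` of the norm polynomial `F F̄` is `F(β) ā`.
As `F F̄` has real coefficients this value commutes with `γ`, whence `γ F(β) = F(β) β`: thus `β`
is a right root of `(X - γ) F`, which gives `Q`. A left zero `δ ∈ [γ]` of `Q` is a left zero of
`(X - γ) F`, hence produces the left zero `(δ - γ)⁻¹ δ (δ - γ)` of `F` (for `δ = γ`, the right
root `β` of `F`). Right zeros of `Q` are reduced to left zeros: modulo the real polynomial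
`(X - γ)(X - γ̄)` every polynomial is linear, `A X + B`, on `[γ]`, and a right zero `δ` of
`A X + B` gives the left zero `A δ A⁻¹`.
-/

open MulOpposite Quaternion

theorem isConj_iff_exists_inv_mul_mul {α : Type*} [GroupWithZero α] {a b : α} :
    IsConj a b ↔ ∃ h, h ≠ 0 ∧ b = h⁻¹ * a * h := by
  rw [GroupWithZero.isConj_iff₀]
  constructor
  · rintro ⟨c, hc, rfl⟩
    exact ⟨c⁻¹, inv_ne_zero hc, by rw [inv_inv]⟩
  · rintro ⟨h, hh, rfl⟩
    exact ⟨h⁻¹, inv_ne_zero hh, by rw [inv_inv]⟩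

theorem isConj_inv_mul_mul {α : Type*} [GroupWithZero α] (a : α) {h : α} (hh : h ≠ 0) :
    IsConj a (h⁻¹ * a * h) :=
  isConj_iff_exists_inv_mul_mul.2 ⟨h, hh, rfl⟩

namespace Polynomial

section Semiring

variable {R : Type*} [Semiring R]

theorem eval_mul_of_semiconjBy {p q : R[X]} {x x' : R} (h : SemiconjBy (q.eval x) x x') :
    (p * q).eval x = p.eval x' * q.eval x := by
  induction p using Polynomial.induction_on' with
  | add p r hp hr => rw [add_mul, eval_add, eval_add, hp, hr, add_mul]
  | monomial n c =>
    rw [← C_mul_X_pow_eq_monomial, mul_assoc, eval_C_mul, X_pow_mul, eval_mul_X_pow,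
      (h.pow_right n).eq, eval_C_mul, eval_X_pow, mul_assoc]

theorem commute_eval_of_forall_commute_coeff {p : R[X]} {x : R}
    (h : ∀ n, Commute x (p.coeff n)) : Commute x (p.eval x) := by
  rw [eval_eq_sum, sum_def]
  exact Commute.sum_right _ _ _ fun n _ => (h n).mul_right ((Commute.refl x).pow_right n)

theorem commute_of_forall_commute_coeff {p : R[X]} (h : ∀ a n, Commute a (p.coeff n))
    (q : R[X]) : Commute p q := by
  induction q using Polynomial.induction_on' with
  | add q r hq hr => exact hq.add_right hr
  | monomial n c =>
    rw [← C_mul_X_pow_eq_monomial]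
    refine Commute.mul_right ?_ (commute_X_pow p n).symm
    exact Polynomial.ext fun k => by rw [coeff_mul_C, coeff_C_mul, (h c k).eq]

end Semiring

theorem exists_eq_mul_X_sub_C_add_C_eval {R : Type*} [Ring R] (p : R[X]) (a : R) :
    ∃ q : R[X], p = q * (X - C a) + C (p.eval a) := by
  induction p using Polynomial.induction_on' with
  | add p r hp hr =>
    obtain ⟨q, hq⟩ := hp
    obtain ⟨s, hs⟩ := hr
    refine ⟨q + s, ?_⟩
    rw [eval_add, C_add, add_mul]
    nth_rw 1 [hq, hs]
    abel
  | monomial n c =>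
    refine ⟨C c * ∑ i ∈ Finset.range n, X ^ i * C a ^ (n - 1 - i), ?_⟩
    rw [mul_assoc, (commute_X (C a)).geom_sum₂_mul, eval_monomial, ← C_pow, mul_sub, ← C_mul,
      C_mul_X_pow_eq_monomial, sub_add_cancel]

theorem exists_eq_mul_X_sub_C_of_eval_eq_zero {R : Type*} [Ring R] {p : R[X]} {a : R}
    (h : p.eval a = 0) : ∃ q : R[X], p = q * (X - C a) := by
  obtain ⟨q, hq⟩ := exists_eq_mul_X_sub_C_add_C_eval p a
  exact ⟨q, by rwa [h, C_0, add_zero] at hq⟩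

section StarRing

variable {R : Type*} [Semiring R] [StarRing R]

/-- Coefficientwise `star`; since `X` is central it reverses products. -/
noncomputable def starCoeff (p : R[X]) : R[X] :=
  unop ((opRingEquiv R).symm (p.map (starRingEquiv : R ≃+* Rᵐᵒᵖ).toRingHom))

@[simp]
theorem coeff_starCoeff (p : R[X]) (n : ℕ) : (starCoeff p).coeff n = star (p.coeff n) := by
  have :=
    coeff_opRingEquiv ((opRingEquiv R).symm (p.map (starRingEquiv : R ≃+* Rᵐᵒᵖ).toRingHom)) n
  simp only [RingEquiv.apply_symm_apply, coeff_map] at this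
  simpa [starCoeff] using (congrArg unop this).symm

theorem starCoeff_mul (p q : R[X]) : starCoeff (p * q) = starCoeff q * starCoeff p := by
  simp [starCoeff]

theorem starCoeff_add (p q : R[X]) : starCoeff (p + q) = starCoeff p + starCoeff q := by
  simp [starCoeff]

@[simp]
theorem starCoeff_C (a : R) : starCoeff (C a) = C (star a) := by
  ext n; simp [coeff_C, apply_ite star]

@[simp]
theorem starCoeff_X : starCoeff (X : R[X]) = X := by
  ext n; simp [coeff_X, apply_ite star]

@[simp]
theorem starCoeff_starCoeff (p : R[X]) : starCoeff (starCoeff p) = p := by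
  ext n; simp

@[simp]
theorem support_starCoeff (p : R[X]) : (starCoeff p).support = p.support := by
  ext n; simp

theorem star_coeff_mul_starCoeff_self (p : R[X]) (n : ℕ) :
    star ((p * starCoeff p).coeff n) = (p * starCoeff p).coeff n := by
  rw [← coeff_starCoeff, starCoeff_mul, starCoeff_starCoeff]

end StarRing

theorem starCoeff_sub {R : Type*} [Ring R] [StarRing R] (p q : R[X]) :
    starCoeff (p - q) = starCoeff p - starCoeff q := by
  simp [starCoeff]

end Polynomial

namespace Quaternion

variable {R : Type*}

theorem re_mul_comm [CommRing R] (a b : ℍ[R]) : (a * b).re = (b * a).re := by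
  simp only [re_mul]; ring

theorem commute_of_star_eq_self [CommRing R] [NoZeroDivisors R] [CharZero R] {a : ℍ[R]}
    (ha : star a = a) (x : ℍ[R]) : Commute x a := by
  rw [star_eq_self.1 ha]
  exact (coe_commutes _ x).symm

section LinearOrderedField

variable [Field R] [LinearOrder R] [IsStrictOrderedRing R]

theorem isConj_star (γ : ℍ[R]) : IsConj γ (star γ) := by
  -- conjugation by a pure imaginary `h` orthogonal to `im γ` negates `im γ`
  have key : ∀ h : ℍ[R], h ≠ 0 → h.re = 0 → h.imK = 0 → h.imI * γ.imI + h.imJ * γ.imJ = 0 →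
      IsConj γ (star γ) := by
    intro h hh hre hk horth
    refine GroupWithZero.isConj_iff₀.2 ⟨h, hh, ?_⟩
    rw [mul_inv_eq_iff_eq_mul₀ hh]
    ext <;> simp [hre, hk] <;> linarith
  by_cases hv : γ.imI = 0 ∧ γ.imJ = 0
  · exact key ⟨0, 1, 0, 0⟩ (fun h => by simpa using congrArg QuaternionAlgebra.imI h) rfl rfl
      (by simp [hv.1, hv.2])
  · refine key ⟨0, γ.imJ, -γ.imI, 0⟩ (fun h => hv ⟨?_, ?_⟩) rfl rfl (by simp; ring)
    · simpa using congrArg QuaternionAlgebra.imJ h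
    · simpa using congrArg QuaternionAlgebra.imI h

theorem re_eq_of_isConj {γ δ : ℍ[R]} (h : IsConj γ δ) : δ.re = γ.re := by
  obtain ⟨c, hc, rfl⟩ := GroupWithZero.isConj_iff₀.1 h
  rw [re_mul_comm, ← mul_assoc, inv_mul_cancel₀ hc, one_mul]

theorem normSq_eq_of_isConj {γ δ : ℍ[R]} (h : IsConj γ δ) : normSq δ = normSq γ := by
  obtain ⟨c, hc, rfl⟩ := GroupWithZero.isConj_iff₀.1 h
  rw [map_mul, map_mul, map_inv₀, mul_right_comm, mul_inv_cancel₀ (normSq_ne_zero.2 hc), one_mul]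

end LinearOrderedField

/-- `(X - γ)(X - γ̄)`, written with its real coefficients. -/
noncomputable def charPoly (γ : ℍ) : Polynomial ℍ :=
  (X ^ 2 - C (2 * γ.re) * X + C (normSq γ)).map (algebraMap ℝ ℍ)

theorem commute_coeff_charPoly (γ x : ℍ) (n : ℕ) : Commute x ((charPoly γ).coeff n) := by
  rw [charPoly, coeff_map]
  exact (Algebra.commutes _ x).symm

theorem charPoly_monic (γ : ℍ) : (charPoly γ).Monic := by
  unfold charPoly
  refine Monic.map _ ?_
  monicity!

theorem degree_charPoly (γ : ℍ) : (charPoly γ).degree = 2 := by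
  unfold charPoly
  rw [degree_map]
  compute_degree!

theorem eval_charPoly_of_isConj {γ δ : ℍ} (h : IsConj γ δ) : (charPoly γ).eval δ = 0 := by
  rw [charPoly, eval_map_algebraMap, ← re_eq_of_isConj h, ← normSq_eq_of_isConj h, map_add,
    map_sub, map_mul, aeval_X_pow, aeval_X, aeval_C, aeval_C, Quaternion.algebraMap_def,
    ← self_add_star', ← star_mul_self]
  noncomm_ring

end Quaternion

theorem levalQ_eq_star_eval_starCoeff (α : ℍ) (p : Polynomial ℍ) :
    levalQ α p = star ((starCoeff p).eval (star α)) := by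
  rw [levalQ, eval_eq_sum, sum_def, sum_def, support_starCoeff, star_sum]
  refine Finset.sum_congr rfl fun n _ => ?_
  rw [coeff_starCoeff, ← star_pow, ← star_mul, star_star]

theorem levalQ_mul_of_semiconjBy {p q : Polynomial ℍ} {α α' : ℍ}
    (h : SemiconjBy (levalQ α p) α' α) : levalQ α (p * q) = levalQ α p * levalQ α' q := by
  have h' : SemiconjBy ((starCoeff p).eval (star α)) (star α) (star α') := by
    simpa [levalQ_eq_star_eval_starCoeff] using h.star_star_star
  simp only [levalQ_eq_star_eval_starCoeff, starCoeff_mul, eval_mul_of_semiconjBy h', star_mul]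

theorem levalQ_add (α : ℍ) (p q : Polynomial ℍ) :
    levalQ α (p + q) = levalQ α p + levalQ α q := by
  simp [levalQ_eq_star_eval_starCoeff, starCoeff_add]

theorem levalQ_X_sub_C (α c : ℍ) : levalQ α (X - C c) = α - c := by
  simp [levalQ_eq_star_eval_starCoeff, starCoeff_sub]

theorem levalQ_C_mul_X_add_C (α a b : ℍ) : levalQ α (C a * X + C b) = α * a + b := by
  simp [levalQ_eq_star_eval_starCoeff, starCoeff_add, starCoeff_mul, X_mul_C]

theorem levalQ_eq_eval_of_forall_commute {α : ℍ} {p : Polynomial ℍ}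
    (h : ∀ n, Commute α (p.coeff n)) : levalQ α p = p.eval α := by
  rw [levalQ, eval_eq_sum, sum_def, sum_def]
  exact Finset.sum_congr rfl fun n _ => ((h n).pow_left n).eq

theorem exists_eq_X_sub_C_mul_of_levalQ_eq_zero {p : Polynomial ℍ} {a : ℍ}
    (h : levalQ a p = 0) : ∃ q : Polynomial ℍ, p = (X - C a) * q := by
  obtain ⟨q, hq⟩ := exists_eq_mul_X_sub_C_of_eval_eq_zero (p := starCoeff p) (a := star a)
    (by rwa [levalQ_eq_star_eval_starCoeff, star_eq_zero] at h)
  refine ⟨starCoeff q, ?_⟩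
  rw [← starCoeff_starCoeff p, hq, starCoeff_mul, starCoeff_sub]
  simp

/-- `A X + B` is the remainder of `P` modulo `charPoly γ`. -/
theorem exists_eval_eq_and_levalQ_eq (P : Polynomial ℍ) (γ : ℍ) :
    ∃ A B : ℍ, ∀ δ, IsConj γ δ → P.eval δ = A * δ + B ∧ levalQ δ P = δ * A + B := by
  set Δ := charPoly γ
  have hdeg : (P %ₘ Δ).degree ≤ 1 := by
    have := degree_modByMonic_lt P (charPoly_monic γ)
    rw [degree_charPoly] at this
    exact Order.le_of_lt_succ this
  obtain ⟨A, B, S, hP⟩ : ∃ (A B : ℍ) (S : Polynomial ℍ), P = C A * X + C B + Δ * S :=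
    ⟨_, _, P /ₘ Δ, by rw [← eq_X_add_C_of_degree_le_one hdeg, modByMonic_add_div]⟩
  refine ⟨A, B, fun δ hδ => ⟨?_, ?_⟩⟩ <;> rw [hP]
  · have hΔ : Δ.eval δ = 0 := eval_charPoly_of_isConj hδ
    rw [eval_add, (commute_of_forall_commute_coeff (commute_coeff_charPoly γ) S).eq,
      eval_mul_of_semiconjBy (x' := δ) (by rw [hΔ]; exact SemiconjBy.zero_left _ _), hΔ]
    simp
  · have hΔ : levalQ δ Δ = 0 := by
      rw [levalQ_eq_eval_of_forall_commute (commute_coeff_charPoly γ δ),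
        eval_charPoly_of_isConj hδ]
    rw [levalQ_add,
      levalQ_mul_of_semiconjBy (α' := δ) (by rw [hΔ]; exact SemiconjBy.zero_left _ _), hΔ,
      levalQ_C_mul_X_add_C]
    simp

theorem exists_levalQ_eq_zero_of_eval_eq_zero {P : Polynomial ℍ} {γ δ : ℍ} (hδ : IsConj γ δ)
    (h : P.eval δ = 0) : ∃ δ', IsConj γ δ' ∧ levalQ δ' P = 0 := by
  obtain ⟨A, B, hAB⟩ := exists_eval_eq_and_levalQ_eq P γ
  have hAδB : A * δ + B = 0 := (hAB δ hδ).1 ▸ h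
  by_cases hA : A = 0
  · refine ⟨δ, hδ, ?_⟩
    rw [(hAB δ hδ).2, hA, mul_zero, zero_add]
    simpa [hA] using hAδB
  · have hδ' : IsConj γ (A * δ * A⁻¹) := hδ.trans (GroupWithZero.isConj_iff₀.2 ⟨A, hA, rfl⟩)
    refine ⟨A * δ * A⁻¹, hδ', ?_⟩
    rw [(hAB _ hδ').2, inv_mul_cancel_right₀ hA, hAδB]

theorem semiconjBy_eval_inv_mul_mul_levalQ_star {F : Polynomial ℍ} {γ a : ℍ}
    (ha : levalQ (star γ) F = a) (ha0 : a ≠ 0) :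
    SemiconjBy (F.eval (a⁻¹ * γ * a)) (a⁻¹ * γ * a) γ := by
  set β := a⁻¹ * γ * a
  have hstar : (starCoeff F).eval γ = star a := by
    rw [← ha, levalQ_eq_star_eval_starCoeff, star_star, star_star]
  have hβ : SemiconjBy (star a) γ β := by
    rw [SemiconjBy, eq_comm]
    calc β * star a = a⁻¹ * γ * (a * star a) := by simp only [β, mul_assoc]
      _ = a⁻¹ * (a * star a) * γ := by rw [self_mul_star, mul_assoc, ← coe_commutes, ← mul_assoc]
      _ = star a * γ := by rw [inv_mul_cancel_left₀ ha0]
  -- the norm polynomial `F F̄` has real coefficients, so its value at `γ` commutes with `γ`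
  have hnorm : Commute γ ((F * starCoeff F).eval γ) :=
    commute_eval_of_forall_commute_coeff fun n =>
      commute_of_star_eq_self (star_coeff_mul_starCoeff_self F n) γ
  rw [eval_mul_of_semiconjBy (hstar ▸ hβ), hstar] at hnorm
  have : γ * F.eval β * star a = F.eval β * β * star a := by
    rw [mul_assoc, hnorm.eq, mul_assoc, hβ.eq, ← mul_assoc]
  exact (mul_right_cancel₀ (star_ne_zero.2 ha0) this).symm

theorem levalQ_ne_zero_of_X_sub_C_mul_eq {F Q : Polynomial ℍ} {γ β δ : ℍ}
    (hQ : (X - C γ) * F = Q * (X - C β)) (hF : ∀ δ, IsConj γ δ → levalQ δ F ≠ 0)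
    (hβ : F.eval β ≠ 0) (hδ : IsConj γ δ) : levalQ δ Q ≠ 0 := by
  intro hQδ
  by_cases hδγ : δ = γ
  · subst hδγ
    obtain ⟨R, rfl⟩ := exists_eq_X_sub_C_mul_of_levalQ_eq_zero hQδ
    rw [mul_assoc] at hQ
    rw [mul_left_cancel₀ (X_sub_C_ne_zero δ) hQ, eval_mul_X_sub_C] at hβ
    exact hβ rfl
  · have hd : δ - γ ≠ 0 := sub_ne_zero.2 hδγ
    have hsc : SemiconjBy (levalQ δ (X - C γ)) ((δ - γ)⁻¹ * δ * (δ - γ)) δ := by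
      rw [levalQ_X_sub_C, SemiconjBy, ← mul_assoc, ← mul_assoc, mul_inv_cancel₀ hd, one_mul]
    have h0 := congrArg (levalQ δ) hQ
    rw [levalQ_mul_of_semiconjBy hsc, levalQ_mul_of_semiconjBy (α' := δ)
      (by rw [hQδ]; exact SemiconjBy.zero_left _ _), hQδ, zero_mul, levalQ_X_sub_C] at h0
    exact hF _ (hδ.trans (isConj_inv_mul_mul δ hd)) ((mul_eq_zero.1 h0).resolve_left hd)

/-- Moving a left linear factor to the right through a polynomial with no zeros
in the conjugacy class. (`Polynomial.eval` is right evaluation.) -/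
theorem stmt12 (F : Polynomial (Quaternion ℝ)) (γ : Quaternion ℝ)
    (hF : ∀ δ : Quaternion ℝ, (∃ h : Quaternion ℝ, h ≠ 0 ∧ δ = h⁻¹ * γ * h) →
      levalQ δ F ≠ 0 ∧ F.eval δ ≠ 0) :
    (∃ Q : Polynomial (Quaternion ℝ),
      (X - C γ) * F =
        Q * (X - C ((levalQ (star γ) F)⁻¹ * γ * levalQ (star γ) F)) ∧
      ∀ δ : Quaternion ℝ, (∃ h : Quaternion ℝ, h ≠ 0 ∧ δ = h⁻¹ * γ * h) →
        levalQ δ Q ≠ 0 ∧ Q.eval δ ≠ 0) ∧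
    γ = F.eval ((levalQ (star γ) F)⁻¹ * γ * levalQ (star γ) F) *
          ((levalQ (star γ) F)⁻¹ * γ * levalQ (star γ) F) *
          (F.eval ((levalQ (star γ) F)⁻¹ * γ * levalQ (star γ) F))⁻¹ := by
  simp only [← isConj_iff_exists_inv_mul_mul] at hF ⊢
  set a := levalQ (star γ) F with ha
  have ha0 : a ≠ 0 := (hF _ (isConj_star γ)).1
  set β := a⁻¹ * γ * a
  have hb0 : F.eval β ≠ 0 := (hF β (isConj_inv_mul_mul γ ha0)).2
  have hγb : SemiconjBy (F.eval β) β γ := semiconjBy_eval_inv_mul_mul_levalQ_star ha.symm ha0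
  obtain ⟨Q, hQ⟩ := exists_eq_mul_X_sub_C_of_eval_eq_zero (p := (X - C γ) * F) (a := β)
    (by rw [eval_mul_of_semiconjBy hγb, eval_sub, eval_X, eval_C, sub_self, zero_mul])
  have hQl : ∀ δ, IsConj γ δ → levalQ δ Q ≠ 0 := fun δ =>
    levalQ_ne_zero_of_X_sub_C_mul_eq hQ (fun δ hδ => (hF δ hδ).1) hb0
  refine ⟨⟨Q, hQ, fun δ hδ => ⟨hQl δ hδ, fun hQδ => ?_⟩⟩, ?_⟩
  · obtain ⟨δ', hδ', hQδ'⟩ := exists_levalQ_eq_zero_of_eval_eq_zero hδ hQδ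
    exact hQl δ' hδ' hQδ'
  · rw [hγb.eq, mul_inv_cancel_right₀ hb0]
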